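/- arXiv:1910.11188 — 5 statements merged into one kernel-verified Lean document; each statement's English description precedes it below -/
import Mathlib

section
/- Let $1 \le p, q \le 2$. Then every block sequence $(f_j)$ of the biparameter Haar system in $H^p(H^q)$ satisfies the upper $\min(p,q)$-estimate with constant $1$: with $t = \min(p,q)$, $\|\sum_{j=1}^n f_j\|_{H^p(H^q)} \le (\sum_{j=1}^n \|f_j\|_{H^p(H^q)}^t)^{1/t}$. -/
open Finset MeasureTheory
open scoped ENNReal

/-- The `L^∞`-normalized Haar function on the dyadic interval `[k/2^n, (k+1)/2^n)`. -/
noncomputable def haar (n k : ℕ) (x : ℝ) : ℝ :=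
  if (k : ℝ) / 2 ^ n ≤ x ∧ x < ((k : ℝ) + 1 / 2) / 2 ^ n then 1
  else if ((k : ℝ) + 1 / 2) / 2 ^ n ≤ x ∧ x < ((k : ℝ) + 1) / 2 ^ n then -1
  else 0

/-- The biparameter Haar function `h_{I,J}(x,y) = h_I(x) h_J(y)`. -/
noncomputable def haar2 (I J : ℕ × ℕ) (x y : ℝ) : ℝ := haar I.1 I.2 x * haar J.1 J.2 y

/-- The `H^p(H^q)` (mixed-norm Hardy space) norm of the finite linear combination
`∑_{IJ ∈ s} a IJ • h_{IJ}` of biparameter Haar functions, given by the square function formula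
`(∫₀¹ (∫₀¹ (∑_{IJ ∈ s} a_{IJ}² h_{IJ}²(x,y))^{q/2} dy)^{p/q} dx)^{1/p}`. -/
noncomputable def HpHqNorm (p q : ℝ) (s : Finset ((ℕ × ℕ) × (ℕ × ℕ)))
    (a : (ℕ × ℕ) × (ℕ × ℕ) → ℝ) : ℝ :=
  (∫ x in Set.Icc (0 : ℝ) 1,
      (∫ y in Set.Icc (0 : ℝ) 1,
        (∑ IJ ∈ s, (a IJ * haar2 IJ.1 IJ.2 x y) ^ 2) ^ (q / 2)) ^ (p / q)) ^ (1 / p)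

lemma measurable_haar (n k : ℕ) : Measurable (haar n k) := by
  unfold haar
  refine Measurable.ite ?_ measurable_const
    (Measurable.ite ?_ measurable_const measurable_const)
  · exact measurableSet_Ico
  · exact measurableSet_Ico

lemma haar_sq_le_one (n k : ℕ) (x : ℝ) : (haar n k x) ^ 2 ≤ 1 := by
  unfold haar; split_ifs <;> norm_num

lemma measurable_S (u : Finset ((ℕ × ℕ) × (ℕ × ℕ))) (b : (ℕ × ℕ) × (ℕ × ℕ) → ℝ) :
    Measurable (fun z : ℝ × ℝ => ∑ IJ ∈ u, (b IJ * haar2 IJ.1 IJ.2 z.1 z.2) ^ 2) := by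
  refine Finset.measurable_sum u fun IJ _ => ?_
  have h : Measurable fun z : ℝ × ℝ => haar2 IJ.1 IJ.2 z.1 z.2 := by
    unfold haar2
    exact ((measurable_haar _ _).comp measurable_fst).mul
      ((measurable_haar _ _).comp measurable_snd)
  exact (measurable_const.mul h).pow_const 2

lemma S_nonneg (u : Finset ((ℕ × ℕ) × (ℕ × ℕ))) (b : (ℕ × ℕ) × (ℕ × ℕ) → ℝ) (x y : ℝ) :
    0 ≤ ∑ IJ ∈ u, (b IJ * haar2 IJ.1 IJ.2 x y) ^ 2 :=
  Finset.sum_nonneg fun _ _ => sq_nonneg _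

lemma S_le (u : Finset ((ℕ × ℕ) × (ℕ × ℕ))) (b : (ℕ × ℕ) × (ℕ × ℕ) → ℝ) (x y : ℝ) :
    ∑ IJ ∈ u, (b IJ * haar2 IJ.1 IJ.2 x y) ^ 2 ≤ ∑ IJ ∈ u, (b IJ) ^ 2 := by
  refine Finset.sum_le_sum fun IJ _ => ?_
  have h1 := haar_sq_le_one IJ.1.1 IJ.1.2 x
  have h2 := haar_sq_le_one IJ.2.1 IJ.2.2 y
  have h3 := sq_nonneg (haar IJ.1.1 IJ.1.2 x)
  have h4 := sq_nonneg (haar IJ.2.1 IJ.2.2 y)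
  have : (b IJ * haar2 IJ.1 IJ.2 x y) ^ 2
      = (b IJ) ^ 2 * ((haar IJ.1.1 IJ.1.2 x) ^ 2 * (haar IJ.2.1 IJ.2.2 y) ^ 2) := by
    unfold haar2; ring
  rw [this]
  refine mul_le_of_le_one_right (sq_nonneg _) ?_
  calc (haar IJ.1.1 IJ.1.2 x) ^ 2 * (haar IJ.2.1 IJ.2.2 y) ^ 2
      ≤ 1 * 1 := mul_le_mul h1 h2 h4 zero_le_one
    _ = 1 := one_mul 1

lemma HpHqNorm_eq (p q : ℝ) (hp : 0 < p) (hq : 0 < q)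
    (u : Finset ((ℕ × ℕ) × (ℕ × ℕ))) (b : (ℕ × ℕ) × (ℕ × ℕ) → ℝ) :
    HpHqNorm p q u b =
      ((∫⁻ x in Set.Icc (0:ℝ) 1, (∫⁻ y in Set.Icc (0:ℝ) 1,
        (ENNReal.ofReal (∑ IJ ∈ u, (b IJ * haar2 IJ.1 IJ.2 x y) ^ 2)) ^ (q/2)) ^ (p/q))
          ^ (1/p)).toReal := by
  have hSm := measurable_S u b
  have hq2 : (0:ℝ) ≤ q/2 := by positivity
  have hpq : (0:ℝ) ≤ p/q := by positivity
  have hGm : Measurable (fun z : ℝ × ℝ =>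
      (ENNReal.ofReal (∑ IJ ∈ u, (b IJ * haar2 IJ.1 IJ.2 z.1 z.2) ^ 2)) ^ (q/2)) :=
    (hSm.ennreal_ofReal).pow measurable_const
  have hLin : Measurable (fun x : ℝ => ∫⁻ y in Set.Icc (0:ℝ) 1,
      (ENNReal.ofReal (∑ IJ ∈ u, (b IJ * haar2 IJ.1 IJ.2 x y) ^ 2)) ^ (q/2)) :=
    Measurable.lintegral_prod_right (f := fun x y =>
      (ENNReal.ofReal (∑ IJ ∈ u, (b IJ * haar2 IJ.1 IJ.2 x y) ^ 2)) ^ (q/2)) hGm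
  have hLin_ne : ∀ x : ℝ, (∫⁻ y in Set.Icc (0:ℝ) 1,
      (ENNReal.ofReal (∑ IJ ∈ u, (b IJ * haar2 IJ.1 IJ.2 x y) ^ 2)) ^ (q/2)) ≠ ⊤ := by
    intro x
    refine ne_top_of_le_ne_top ?_ (lintegral_mono fun y =>
      ENNReal.rpow_le_rpow (ENNReal.ofReal_le_ofReal (S_le u b x y)) hq2)
    rw [lintegral_const]
    exact ENNReal.mul_ne_top
      (ENNReal.rpow_ne_top_of_nonneg hq2 ENNReal.ofReal_ne_top)
      (by rw [Measure.restrict_apply_univ, Real.volume_Icc]; simp)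
  have inner_eq : ∀ x : ℝ,
      (∫ y in Set.Icc (0:ℝ) 1, (∑ IJ ∈ u, (b IJ * haar2 IJ.1 IJ.2 x y) ^ 2) ^ (q/2))
      = ((∫⁻ y in Set.Icc (0:ℝ) 1,
        (ENNReal.ofReal (∑ IJ ∈ u, (b IJ * haar2 IJ.1 IJ.2 x y) ^ 2)) ^ (q/2))).toReal := by
    intro x
    rw [integral_eq_lintegral_of_nonneg_ae
      (Filter.Eventually.of_forall fun y => Real.rpow_nonneg (S_nonneg u b x y) _)
      (((hSm.comp (measurable_const.prodMk measurable_id)).pow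
        measurable_const).aestronglyMeasurable)]
    congr 1
    refine lintegral_congr fun y => ?_
    rw [← ENNReal.ofReal_rpow_of_nonneg (S_nonneg u b x y) hq2]
  unfold HpHqNorm
  simp only [inner_eq, ENNReal.toReal_rpow]
  rw [← ENNReal.toReal_rpow]
  congr 1
  rw [integral_eq_lintegral_of_nonneg_ae
    (Filter.Eventually.of_forall fun x => ENNReal.toReal_nonneg)
    (((hLin.pow measurable_const).ennreal_toReal).aestronglyMeasurable)]
  congr 1
  refine lintegral_congr fun x => ?_
  exact ENNReal.ofReal_toReal (ENNReal.rpow_ne_top_of_nonneg hpq (hLin_ne x))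

lemma lintegral_Lp_sum_le {α : Type*} [MeasurableSpace α] (μ : Measure α) {ι : Type*}
    [DecidableEq ι] (s : Finset ι) (f : ι → α → ℝ≥0∞) (hf : ∀ i, Measurable (f i)) {r : ℝ}
    (hr : 1 ≤ r) :
    (∫⁻ a, (∑ i ∈ s, f i a) ^ r ∂μ) ^ (1 / r) ≤ ∑ i ∈ s, (∫⁻ a, f i a ^ r ∂μ) ^ (1 / r) := by
  have hr0 : (0:ℝ) < r := lt_of_lt_of_le zero_lt_one hr
  induction s using Finset.induction_on with
  | empty =>
      simp only [Finset.sum_empty]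
      rw [ENNReal.zero_rpow_of_pos hr0, lintegral_zero,
        ENNReal.zero_rpow_of_pos (one_div_pos.mpr hr0)]
  | @insert i s hi ih =>
      simp only [Finset.sum_insert hi]
      calc (∫⁻ a, (f i a + ∑ j ∈ s, f j a) ^ r ∂μ) ^ (1 / r)
          ≤ (∫⁻ a, f i a ^ r ∂μ) ^ (1/r) + (∫⁻ a, (∑ j ∈ s, f j a) ^ r ∂μ) ^ (1/r) := by
            exact ENNReal.lintegral_Lp_add_le (hf i).aemeasurable
              (Finset.measurable_sum s fun j _ => hf j).aemeasurable hr
        _ ≤ _ := add_le_add (le_refl _) ih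

lemma ENNReal.sum_rpow_le_rpow_sum' {ι : Type*} [DecidableEq ι] (s : Finset ι) (f : ι → ℝ≥0∞)
    {r : ℝ} (hr0 : 0 < r) (hr1 : r ≤ 1) :
    (∑ i ∈ s, f i) ^ r ≤ ∑ i ∈ s, f i ^ r := by
  induction s using Finset.induction_on with
  | empty => simp [ENNReal.zero_rpow_of_pos hr0]
  | @insert i s hi ih =>
      simp only [Finset.sum_insert hi]
      exact le_trans (ENNReal.rpow_add_le_add_rpow _ _ hr0.le hr1) (add_le_add (le_refl _) ih)


/-- Upper `min(p,q)`-estimate with constant 1 for block sequences (disjoint Haar spectra)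
in `H^p(H^q)`, `1 ≤ p, q ≤ 2`. -/
theorem upper_min_estimate_HpHq (p q : ℝ) (hp1 : 1 ≤ p) (hp2 : p ≤ 2)
    (hq1 : 1 ≤ q) (hq2 : q ≤ 2)
    (n : ℕ) (s : Fin n → Finset ((ℕ × ℕ) × (ℕ × ℕ)))
    (a : Fin n → (ℕ × ℕ) × (ℕ × ℕ) → ℝ)
    (hdisj : ∀ i j, i ≠ j → Disjoint (s i) (s j))
    (hnonzero : ∀ j, ∃ IJ ∈ s j, a j IJ ≠ 0) :
    HpHqNorm p q (Finset.univ.biUnion s)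
        (fun IJ => ∑ j, if IJ ∈ s j then a j IJ else 0)
      ≤ (∑ j, HpHqNorm p q (s j) (a j) ^ min p q) ^ (1 / min p q) := by
  classical
  have hp0 : (0:ℝ) < p := lt_of_lt_of_le zero_lt_one hp1
  have hq0 : (0:ℝ) < q := lt_of_lt_of_le zero_lt_one hq1
  set t := min p q with htdef
  have ht1 : 1 ≤ t := le_min hp1 hq1
  have ht0 : (0:ℝ) < t := lt_of_lt_of_le zero_lt_one ht1
  have htp : t ≤ p := min_le_left _ _
  have htq : t ≤ q := min_le_right _ _
  have ht2 : t ≤ 2 := le_trans htp hp2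
  have hpne : p ≠ 0 := ne_of_gt hp0
  have hqne : q ≠ 0 := ne_of_gt hq0
  have htne : t ≠ 0 := ne_of_gt ht0
  set G : Fin n → ℝ → ℝ → ℝ≥0∞ := fun j x y =>
    ENNReal.ofReal (∑ IJ ∈ s j, (a j IJ * haar2 IJ.1 IJ.2 x y) ^ 2) with hGdef
  have hGm : ∀ j, Measurable (fun z : ℝ × ℝ => G j z.1 z.2) := fun j =>
    (measurable_S (s j) (a j)).ennreal_ofReal
  -- pointwise spectrum identity
  have key : ∀ x y : ℝ,
      ENNReal.ofReal (∑ IJ ∈ Finset.univ.biUnion s,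
        ((∑ j, if IJ ∈ s j then a j IJ else 0) * haar2 IJ.1 IJ.2 x y) ^ 2)
      = ∑ j, G j x y := by
    intro x y
    have hsum : (∑ IJ ∈ Finset.univ.biUnion s,
        ((∑ j, if IJ ∈ s j then a j IJ else 0) * haar2 IJ.1 IJ.2 x y) ^ 2)
        = ∑ j, ∑ IJ ∈ s j, (a j IJ * haar2 IJ.1 IJ.2 x y) ^ 2 := by
      rw [Finset.sum_biUnion (fun i _ j _ hij => hdisj i j hij)]
      refine Finset.sum_congr rfl fun j _ => Finset.sum_congr rfl fun IJ hIJ => ?_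
      have : (∑ j', if IJ ∈ s j' then a j' IJ else 0) = a j IJ := by
        rw [Finset.sum_eq_single j
          (fun j' _ hj' => if_neg fun h => (Finset.disjoint_left.mp (hdisj j' j hj') h hIJ))
          (fun h => absurd (Finset.mem_univ j) h)]
        exact if_pos hIJ
      rw [this]
    rw [hsum, ENNReal.ofReal_sum_of_nonneg (fun j _ => S_nonneg (s j) (a j) x y)]
  -- abbreviations
  set Lin : Fin n → ℝ → ℝ≥0∞ := fun j x =>
    ∫⁻ y in Set.Icc (0:ℝ) 1, (G j x y) ^ (q/2) with hLindef
  set LL : Fin n → ℝ≥0∞ := fun j => ∫⁻ x in Set.Icc (0:ℝ) 1, (Lin j x) ^ (p/q) with hLLdef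
  have hLinm : ∀ j, Measurable (Lin j) := fun j =>
    Measurable.lintegral_prod_right (f := fun x y => (G j x y) ^ (q/2))
      ((hGm j).pow measurable_const)
  have hLin_le : ∀ j x, Lin j x ≤ (ENNReal.ofReal (∑ IJ ∈ s j, (a j IJ) ^ 2)) ^ (q/2) := by
    intro j x
    refine le_trans (lintegral_mono fun y => ENNReal.rpow_le_rpow
      (ENNReal.ofReal_le_ofReal (S_le (s j) (a j) x y)) (by positivity)) ?_
    rw [lintegral_const, Measure.restrict_apply_univ, Real.volume_Icc]
    simp
  have hLL_ne : ∀ j, LL j ≠ ⊤ := by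
    intro j
    refine ne_top_of_le_ne_top ?_ (lintegral_mono fun x =>
      ENNReal.rpow_le_rpow (hLin_le j x) (by positivity : (0:ℝ) ≤ p/q))
    rw [lintegral_const, Measure.restrict_apply_univ, Real.volume_Icc]
    simp only [sub_zero, ENNReal.ofReal_one, mul_one]
    exact ENNReal.rpow_ne_top_of_nonneg (by positivity)
      (ENNReal.rpow_ne_top_of_nonneg (by positivity) ENNReal.ofReal_ne_top)
  -- the main ENNReal chain
  have step1 : ∀ x, (∫⁻ y in Set.Icc (0:ℝ) 1, (∑ j, G j x y) ^ (q/2))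
      ≤ (∑ j, (Lin j x) ^ (t/q)) ^ (q/t) := by
    intro x
    have e3 : (∫⁻ y in Set.Icc (0:ℝ) 1, (∑ j, G j x y) ^ (q/2))
        ≤ ∫⁻ y in Set.Icc (0:ℝ) 1, (∑ j, (G j x y) ^ (t/2)) ^ (q/t) := by
      refine lintegral_mono fun y => ?_
      have e1 : (∑ j, G j x y) ^ (q/2) = ((∑ j, G j x y) ^ (t/2)) ^ (q/t) := by
        rw [← ENNReal.rpow_mul]
        congr 1
        field_simp
      rw [e1]
      exact ENNReal.rpow_le_rpow
        (ENNReal.sum_rpow_le_rpow_sum' _ _ (by positivity) (by linarith)) (by positivity)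
    have mink := lintegral_Lp_sum_le ((volume : Measure ℝ).restrict (Set.Icc (0:ℝ) 1))
      Finset.univ (fun j y => (G j x y) ^ (t/2))
      (fun j => (((hGm j).comp (measurable_const.prodMk measurable_id)).pow
        measurable_const))
      (by rw [le_div_iff₀ ht0]; linarith : (1:ℝ) ≤ q/t)
    rw [one_div_div] at mink
    simp only [← ENNReal.rpow_mul] at mink
    have hexp : t/2 * (q/t) = q/2 := by field_simp
    rw [hexp] at mink
    calc (∫⁻ y in Set.Icc (0:ℝ) 1, (∑ j, G j x y) ^ (q/2))
        ≤ ∫⁻ y in Set.Icc (0:ℝ) 1, (∑ j, (G j x y) ^ (t/2)) ^ (q/t) := e3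
      _ = ((∫⁻ y in Set.Icc (0:ℝ) 1, (∑ j, (G j x y) ^ (t/2)) ^ (q/t)) ^ (t/q)) ^ (q/t) := by
          rw [← ENNReal.rpow_mul, show t/q*(q/t) = 1 by
            rw [div_mul_div_comm, mul_comm t q, div_self (mul_ne_zero hqne htne)],
            ENNReal.rpow_one]
      _ ≤ (∑ j, (Lin j x) ^ (t/q)) ^ (q/t) := ENNReal.rpow_le_rpow mink (by positivity)
  have step2 : ∀ x, ((∫⁻ y in Set.Icc (0:ℝ) 1, (∑ j, G j x y) ^ (q/2))) ^ (p/q)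
      ≤ (∑ j, (Lin j x) ^ (t/q)) ^ (p/t) := by
    intro x
    calc ((∫⁻ y in Set.Icc (0:ℝ) 1, (∑ j, G j x y) ^ (q/2))) ^ (p/q)
        ≤ ((∑ j, (Lin j x) ^ (t/q)) ^ (q/t)) ^ (p/q) :=
          ENNReal.rpow_le_rpow (step1 x) (by positivity)
      _ = (∑ j, (Lin j x) ^ (t/q)) ^ (p/t) := by
          rw [← ENNReal.rpow_mul]
          congr 1
          field_simp
  have mink2 := lintegral_Lp_sum_le ((volume : Measure ℝ).restrict (Set.Icc (0:ℝ) 1))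
    Finset.univ (fun j x => (Lin j x) ^ (t/q))
    (fun j => (hLinm j).pow measurable_const)
    (by rw [le_div_iff₀ ht0]; linarith : (1:ℝ) ≤ p/t)
  rw [one_div_div] at mink2
  simp only [← ENNReal.rpow_mul] at mink2
  have hexp2 : t/q * (p/t) = p/q := by field_simp
  rw [hexp2] at mink2
  -- mink2 : (∫⁻ x, (∑ j, Lin j x ^ (t/q)) ^ (p/t)) ^ (t/p) ≤ ∑ j, (LL j) ^ (t/p)
  have chain : (∫⁻ x in Set.Icc (0:ℝ) 1,
        (∫⁻ y in Set.Icc (0:ℝ) 1, (∑ j, G j x y) ^ (q/2)) ^ (p/q)) ^ (1/p)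
      ≤ (∑ j, (LL j) ^ (t/p)) ^ (1/t) := by
    calc (∫⁻ x in Set.Icc (0:ℝ) 1,
          (∫⁻ y in Set.Icc (0:ℝ) 1, (∑ j, G j x y) ^ (q/2)) ^ (p/q)) ^ (1/p)
        ≤ (∫⁻ x in Set.Icc (0:ℝ) 1, (∑ j, (Lin j x) ^ (t/q)) ^ (p/t)) ^ (1/p) :=
          ENNReal.rpow_le_rpow (lintegral_mono step2) (by positivity)
      _ = ((∫⁻ x in Set.Icc (0:ℝ) 1, (∑ j, (Lin j x) ^ (t/q)) ^ (p/t)) ^ (t/p)) ^ (1/t) := by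
          rw [← ENNReal.rpow_mul]
          congr 1
          field_simp
      _ ≤ (∑ j, (LL j) ^ (t/p)) ^ (1/t) := ENNReal.rpow_le_rpow mink2 (by positivity)
  -- convert to reals
  have hLHS : HpHqNorm p q (Finset.univ.biUnion s)
      (fun IJ => ∑ j, if IJ ∈ s j then a j IJ else 0)
      = ((∫⁻ x in Set.Icc (0:ℝ) 1,
          (∫⁻ y in Set.Icc (0:ℝ) 1, (∑ j, G j x y) ^ (q/2)) ^ (p/q)) ^ (1/p)).toReal := by
    rw [HpHqNorm_eq p q hp0 hq0]
    congr 1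
    simp only [key]
  have hRHSj : ∀ j, HpHqNorm p q (s j) (a j) ^ t = ((LL j) ^ (t/p)).toReal := by
    intro j
    rw [HpHqNorm_eq p q hp0 hq0, ENNReal.toReal_rpow, ← ENNReal.rpow_mul]
    congr 2
    rw [one_div_mul_eq_div]
  have hRHS : (∑ j, HpHqNorm p q (s j) (a j) ^ t) ^ (1/t)
      = (((∑ j, (LL j) ^ (t/p)) ^ (1/t)) : ℝ≥0∞).toReal := by
    rw [← ENNReal.toReal_rpow]
    congr 1
    rw [ENNReal.toReal_sum (fun j _ =>
      ENNReal.rpow_ne_top_of_nonneg (by positivity) (hLL_ne j))]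
    exact Finset.sum_congr rfl fun j _ => hRHSj j
  rw [hLHS, hRHS]
  refine ENNReal.toReal_mono ?_ chain
  exact ENNReal.rpow_ne_top_of_nonneg (by positivity)
    (ENNReal.sum_ne_top.mpr fun j _ =>
      ENNReal.rpow_ne_top_of_nonneg (by positivity) (hLL_ne j))
end

section
/- Let $g_1, \dots, g_n$ be nonnegative measurable functions on $[0,1]^2$. If $p \ge 2 \ge q \ge 1$, then $(\int_0^1 (\int_0^1 (\sum_{j=1}^n g_j^2)^{q/2} dy)^{p/q} dx)^{1/p} \ge (\sum_{j=1}^n \int_0^1 (\int_0^1 g_j^q dy)^{p/q} dx)^{1/p}$. -/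
open MeasureTheory Finset
open scoped ENNReal

/-- Superadditivity of `t ↦ t ^ s` for `s ≥ 1` on `ℝ≥0∞`, over a finite sum. -/
lemma aux_sum_rpow_le_rpow_sum {ι : Type*} (s : Finset ι) (b : ι → ℝ≥0∞) {r : ℝ}
    (hr : 1 ≤ r) : ∑ j ∈ s, b j ^ r ≤ (∑ j ∈ s, b j) ^ r := by
  have h0 : (0:ℝ) ≤ r - 1 := by linarith
  have hsplit : ∀ c : ℝ≥0∞, c ^ r = c ^ (r - 1) * c := by
    intro c
    have h := ENNReal.rpow_add_of_nonneg (x := c) (r - 1) 1 h0 zero_le_one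
    rw [sub_add_cancel, ENNReal.rpow_one] at h
    exact h
  calc ∑ j ∈ s, b j ^ r = ∑ j ∈ s, b j ^ (r - 1) * b j := by
        exact Finset.sum_congr rfl fun j _ => hsplit (b j)
    _ ≤ ∑ j ∈ s, (∑ i ∈ s, b i) ^ (r - 1) * b j := by
        refine Finset.sum_le_sum fun j hj => ?_
        exact mul_le_mul_left (ENNReal.rpow_le_rpow (Finset.single_le_sum
          (fun i _ => zero_le) hj) h0) _
    _ = (∑ i ∈ s, b i) ^ (r - 1) * ∑ j ∈ s, b j := by rw [← Finset.mul_sum]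
    _ = (∑ i ∈ s, b i) ^ r := (hsplit _).symm

/-- Minkowski's integral inequality (finite-sum `ℓ^r` form):
`(∑ (∫ f_j))^r)^{1/r} ≤ ∫ (∑ f_j^r)^{1/r}`, stated with both sides raised to `r`. -/
lemma aux_minkowski_sum_lintegral {α : Type*} [MeasurableSpace α] (μ : Measure α) {n : ℕ}
    (f : Fin n → α → ℝ≥0∞) (hf : ∀ j, Measurable (f j)) {r : ℝ} (hr : 1 ≤ r) :
    ∑ j, (∫⁻ y, f j y ∂μ) ^ r ≤ (∫⁻ y, (∑ j, f j y ^ r) ^ (1 / r) ∂μ) ^ r := by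
  have hr0 : 0 < r := lt_of_lt_of_le one_pos hr
  set S : α → ℝ≥0∞ := fun y => (∑ j, f j y ^ r) ^ (1 / r) with hS
  have hfS : ∀ j y, f j y ≤ S y := by
    intro j y
    have h1 : f j y = (f j y ^ r) ^ (1 / r) := by
      rw [one_div, ENNReal.rpow_rpow_inv hr0.ne']
    rw [h1, hS]
    exact ENNReal.rpow_le_rpow (Finset.single_le_sum (f := fun i => f i y ^ r)
      (fun i _ => zero_le) (Finset.mem_univ j)) (by positivity)
  set I : ℝ≥0∞ := ∫⁻ y, S y ∂μ with hI
  set a : Fin n → ℝ≥0∞ := fun j => ∫⁻ y, f j y ∂μ with ha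
  set A : ℝ≥0∞ := ∑ j, a j ^ r with hA
  show A ≤ I ^ r
  rcases eq_or_lt_of_le hr with rfl | hr1
  · -- r = 1 : equality via linearity
    rw [hA, hI, hS]
    simp only [ENNReal.rpow_one, one_div_one]
    rw [← lintegral_finset_sum _ (fun j _ => hf j)]
  -- r > 1
  by_cases hAtop : A = ⊤
  · -- some a j = ⊤, so I = ⊤
    obtain ⟨j, -, hj⟩ := ENNReal.sum_eq_top.mp (by rw [← hA]; exact hAtop)
    have haj : a j = ⊤ := by
      by_contra h
      exact (ENNReal.rpow_ne_top_of_nonneg hr0.le h) hj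
    have hItop : I = ⊤ := by
      rw [eq_top_iff, ← haj]
      exact lintegral_mono (fun y => hfS j y)
    rw [hItop, ENNReal.top_rpow_of_pos hr0]
    exact le_top
  by_cases hA0 : A = 0
  · rw [hA0]; exact zero_le
  -- 0 < A < ⊤
  have hpq : r.HolderConjugate (r / (r - 1)) := Real.HolderConjugate.conjExponent hr1
  set r' : ℝ := r / (r - 1) with hr'
  have haj_ne_top : ∀ j, a j ≠ ⊤ := by
    intro j h
    apply hAtop
    rw [hA]
    rw [ENNReal.sum_eq_top]
    exact ⟨j, Finset.mem_univ j, by rw [h, ENNReal.top_rpow_of_pos hr0]⟩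
  have key : A ≤ A ^ (1 / r') * I := by
    have hsplitaj : ∀ j, a j ^ r = a j ^ (r - 1) * a j := by
      intro j
      have h := ENNReal.rpow_add_of_nonneg (x := a j) (r - 1) 1 (by linarith) zero_le_one
      rw [sub_add_cancel, ENNReal.rpow_one] at h
      exact h
    have step1 : A = ∫⁻ y, ∑ j, a j ^ (r - 1) * f j y ∂μ := by
      rw [lintegral_finset_sum _ (fun j _ => ((hf j).const_mul _)), hA]
      refine Finset.sum_congr rfl fun j _ => ?_
      rw [lintegral_const_mul' _ _ (ENNReal.rpow_ne_top_of_nonneg (by linarith) (haj_ne_top j))]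
      exact hsplitaj j
    have step2 : ∀ y, ∑ j, a j ^ (r - 1) * f j y ≤ A ^ (1 / r') * S y := by
      intro y
      have h := ENNReal.inner_le_Lp_mul_Lq Finset.univ (fun j => a j ^ (r - 1))
        (fun j => f j y) hpq.symm
      refine h.trans_eq ?_
      rw [hA, hS]
      congr 2
      refine Finset.sum_congr rfl fun j _ => ?_
      rw [← ENNReal.rpow_mul]
      rw [hr', mul_div_cancel₀ _ (by linarith : r - 1 ≠ 0)]
    calc A = ∫⁻ y, ∑ j, a j ^ (r - 1) * f j y ∂μ := step1
      _ ≤ ∫⁻ y, A ^ (1 / r') * S y ∂μ := lintegral_mono step2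
      _ = A ^ (1 / r') * I := by
          rw [lintegral_const_mul' _ _ (ENNReal.rpow_ne_top_of_nonneg
            hpq.symm.one_div_nonneg hAtop)]
  -- cancel A ^ (1/r')
  have hsumexp : 1 / r' + 1 / r = 1 := by
    rw [one_div, one_div, add_comm]
    exact hpq.inv_add_inv_eq_one
  have hsplit : A = A ^ (1 / r') * A ^ (1 / r) := by
    rw [← ENNReal.rpow_add_of_nonneg _ _ hpq.symm.one_div_nonneg hpq.one_div_nonneg,
      hsumexp, ENNReal.rpow_one]
  have hcancel : A ^ (1 / r) ≤ I := by
    have h1 : A ^ (1 / r') * A ^ (1 / r) ≤ A ^ (1 / r') * I := by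
      rw [← hsplit]; exact key
    have h2 : A ^ (1 / r') ≠ 0 := by
      simp only [ne_eq, ENNReal.rpow_eq_zero_iff, not_or]
      exact ⟨fun h => hA0 h.1, fun h => hAtop h.1⟩
    have h3 : A ^ (1 / r') ≠ ⊤ := ENNReal.rpow_ne_top_of_nonneg hpq.symm.one_div_nonneg hAtop
    exact (ENNReal.mul_le_mul_iff_right h2 h3).mp h1
  calc A = (A ^ (1 / r)) ^ r := by
        rw [← ENNReal.rpow_mul, one_div, inv_mul_cancel₀ hr0.ne', ENNReal.rpow_one]
    _ ≤ I ^ r := ENNReal.rpow_le_rpow hcancel hr0.le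

/-- For nonnegative measurable functions `g_1, …, g_n` on `[0,1]²` and `p ≥ 2 ≥ q ≥ 1`:
`(∫₀¹ (∫₀¹ (∑ g_j²)^{q/2} dy)^{p/q} dx)^{1/p} ≥ (∑_j ∫₀¹ (∫₀¹ g_j^q dy)^{p/q} dx)^{1/p}`. -/
theorem lower_estimate_integral_inequality_q_le_two_le_p
    (p q : ℝ) (hq1 : 1 ≤ q) (hq2 : q ≤ 2) (hp : 2 ≤ p)
    (n : ℕ) (g : Fin n → ℝ → ℝ → ℝ)
    (hmeas : ∀ j, Measurable (Function.uncurry (g j)))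
    (hnonneg : ∀ j x y, 0 ≤ g j x y) :
    ((∑ j, ∫⁻ x in Set.Icc (0 : ℝ) 1,
        (∫⁻ y in Set.Icc (0 : ℝ) 1, ENNReal.ofReal (g j x y) ^ q) ^ (p / q)) ^ (1 / p))
      ≤ (∫⁻ x in Set.Icc (0 : ℝ) 1,
          (∫⁻ y in Set.Icc (0 : ℝ) 1,
            (∑ j, ENNReal.ofReal (g j x y) ^ (2 : ℝ)) ^ (q / 2)) ^ (p / q)) ^ (1 / p) := by
  have hq0 : 0 < q := lt_of_lt_of_le one_pos hq1
  have hp0 : 0 < p := by linarith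
  set G : Fin n → ℝ → ℝ → ℝ≥0∞ := fun j x y => ENNReal.ofReal (g j x y) with hG
  have hGmeas : ∀ j, Measurable fun z : ℝ × ℝ => G j z.1 z.2 := fun j =>
    ENNReal.measurable_ofReal.comp (hmeas j)
  set A : Fin n → ℝ → ℝ≥0∞ :=
    fun j x => ∫⁻ y in Set.Icc (0 : ℝ) 1, G j x y ^ q with hA
  have hAmeas : ∀ j, Measurable (A j) := by
    intro j
    exact Measurable.lintegral_prod_right' ((hGmeas j).pow_const q)
  set B : ℝ → ℝ≥0∞ :=
    fun x => ∫⁻ y in Set.Icc (0 : ℝ) 1, (∑ j, G j x y ^ (2:ℝ)) ^ (q / 2) with hB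
  -- pointwise (in x) inequality
  have key : ∀ x, ∑ j, A j x ^ (p / q) ≤ B x ^ (p / q) := by
    intro x
    have hsecmeas : ∀ j, Measurable (fun y => G j x y ^ q) := by
      intro j
      exact ((hGmeas j).comp (measurable_const.prodMk measurable_id)).pow_const q
    have hr : (1:ℝ) ≤ 2 / q := by
      rw [le_div_iff₀ hq0]; linarith
    have mink := aux_minkowski_sum_lintegral (volume.restrict (Set.Icc (0:ℝ) 1))
      (fun j y => G j x y ^ q) hsecmeas hr
    -- rewrite the right side of mink as B x ^ (2/q)
    have hrw : (∫⁻ y in Set.Icc (0:ℝ) 1, (∑ j, (G j x y ^ q) ^ (2/q)) ^ (1/(2/q))) ^ (2/q)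
        = B x ^ (2/q) := by
      congr 1
      refine lintegral_congr fun y => ?_
      congr 1
      · refine Finset.sum_congr rfl fun j _ => ?_
        rw [← ENNReal.rpow_mul]
        congr 1
        field_simp
      · field_simp
    rw [hrw] at mink
    -- mink : ∑ j, A j x ^ (2/q) ≤ B x ^ (2/q)
    have hps : (1:ℝ) ≤ p / 2 := by rw [le_div_iff₀ (by norm_num : (0:ℝ) < 2)]; linarith
    calc ∑ j, A j x ^ (p / q) = ∑ j, (A j x ^ (2/q)) ^ (p/2) := by
          refine Finset.sum_congr rfl fun j _ => ?_
          rw [← ENNReal.rpow_mul]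
          congr 1
          field_simp
      _ ≤ (∑ j, A j x ^ (2/q)) ^ (p/2) :=
          aux_sum_rpow_le_rpow_sum Finset.univ _ hps
      _ ≤ (B x ^ (2/q)) ^ (p/2) := ENNReal.rpow_le_rpow mink (by positivity)
      _ = B x ^ (p / q) := by
          rw [← ENNReal.rpow_mul]
          congr 1
          field_simp
  -- integrate in x and take 1/p power
  refine ENNReal.rpow_le_rpow ?_ (by positivity)
  calc ∑ j, ∫⁻ x in Set.Icc (0:ℝ) 1, A j x ^ (p / q)
      = ∫⁻ x in Set.Icc (0:ℝ) 1, ∑ j, A j x ^ (p / q) := by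
        rw [lintegral_finset_sum _ (fun j _ => (hAmeas j).pow_const _)]
    _ ≤ ∫⁻ x in Set.Icc (0:ℝ) 1, B x ^ (p / q) := lintegral_mono fun x => key x
end

section
/- Let $X_k$, $k \in \mathbb{N}$, be Banach spaces with normalized bases $(e_{(k,j)})_j$, and let $Z = \ell^\infty(X_k)$. Assume the array $(e_{(k,j)})$ is uniformly asymptotically curved. Then for every $z^* \in Z^*$ and every $\eta > 0$ there exists a sequence $(m_k) \subset \mathbb{N}$ such that, setting $W_k = [e_{(k,j)} : j \ge m_k]$ (the closed linear span of the tail of the $k$-th basis), we have $|z^*(w)| \le \eta$ for every $w = (w_k) \in Z$ with $\|w\| \le 1$ and $w_k \in W_k$ for all $k$; equivalently $\|z^*|_{\ell^\infty(W_k : k \in \mathbb{N})}\| \le \eta$. -/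
/-!
Suppose no tails work. Then for every choice of tails `m` there is a `w` in the unit ball of
`ℓ^∞(W_k)` with `z*(w) > η` (after a sign change). Approximating each coordinate of `w` by a
finitely supported vector of the tail, and choosing the next tails beyond the supports used so
far, produces vectors `w_1, w_2, …` whose coordinates are `δ`-close to successive blocks. The
averages `(w_1 + ⋯ + w_n) / n` keep `z*` above `η`, while uniform asymptotic curvature makes
their norms at most `2δ` for large `n`; for `δ` small compared to `η / ‖z*‖` this is absurd.
-/

open Finset
open scoped ENNReal

def IsBlockSequence {V : Type*} [AddCommMonoid V] [Module ℝ V]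
    (e : ℕ → V) (x : ℕ → V) : Prop :=
  ∃ (A : ℕ → Finset ℕ) (a : ℕ → ℕ → ℝ),
    (∀ j, x j = ∑ i ∈ A j, a j i • e i) ∧ (∀ j, x j ≠ 0) ∧
    (∀ j, ∀ i ∈ A j, ∀ i' ∈ A (j + 1), i < i')

open Filter Topology

def closedTailSpan {V : Type*} [NormedAddCommGroup V] [NormedSpace ℝ V] (e : ℕ → V) (m : ℕ) :
    Submodule ℝ V :=
  (Submodule.span ℝ (e '' {j | m ≤ j})).topologicalClosure

def UniformlyAsymptoticallyCurved {ι : Type*} {X : ι → Type*} [∀ k, NormedAddCommGroup (X k)]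
    [∀ k, NormedSpace ℝ (X k)] (e : ∀ k, ℕ → X k) : Prop :=
  ∀ x : ∀ k, ℕ → X k, (∀ k, IsBlockSequence (e k) (x k)) → (∀ k j, ‖x k j‖ ≤ 1) →
    Tendsto (fun n : ℕ => ⨆ k, ‖(1 / (n : ℝ)) • ∑ j ∈ range n, x k j‖) atTop (𝓝 0)

lemma IsBlockSequence.const_smul {V : Type*} [AddCommMonoid V] [Module ℝ V] {e x : ℕ → V}
    (hx : IsBlockSequence e x) {c : ℝ} (hc : c ≠ 0) : IsBlockSequence e fun j => c • x j := by
  obtain ⟨A, a, hxa, hx0, hA⟩ := hx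
  refine ⟨A, fun j i => c * a j i, fun j => ?_, fun j => smul_ne_zero hc (hx0 j), hA⟩
  simp only [hxa, smul_sum, smul_smul]

lemma norm_average_range_le {E : Type*} [SeminormedAddCommGroup E] [NormedSpace ℝ E]
    {v : ℕ → E} {C : ℝ} (hC : 0 ≤ C) (hv : ∀ j, ‖v j‖ ≤ C) (n : ℕ) :
    ‖(1 / (n : ℝ)) • ∑ j ∈ range n, v j‖ ≤ C := by
  rcases n.eq_zero_or_pos with rfl | hn
  · simpa using hC
  calc ‖(1 / (n : ℝ)) • ∑ j ∈ range n, v j‖ ≤ 1 / n * ∑ j ∈ range n, ‖v j‖ := by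
        rw [norm_smul, Real.norm_of_nonneg (by positivity)]
        gcongr
        exact norm_sum_le _ _
    _ ≤ 1 / n * (n * C) := by
        gcongr
        simpa using sum_le_sum fun j (_ : j ∈ range n) => hv j
    _ = C := by field_simp

lemma exists_ne_zero_norm_sub_le_of_mem_topologicalClosure {V : Type*} [NormedAddCommGroup V]
    [NormedSpace ℝ V] {K : Submodule ℝ V} {u : V} (hu : u ∈ K) (hu0 : u ≠ 0) {v : V}
    (hv : v ∈ K.topologicalClosure) {δ : ℝ} (hδ : 0 < δ) :
    ∃ y ∈ K, y ≠ 0 ∧ ‖v - y‖ ≤ δ := by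
  rw [← SetLike.mem_coe, K.topologicalClosure_coe] at hv
  obtain ⟨y, hyK, hvy⟩ := Metric.mem_closure_iff.mp hv (δ / 2) (half_pos hδ)
  rw [dist_eq_norm] at hvy
  by_cases hy0 : y = 0
  · -- `0` is a `δ / 2`-approximation, so any vector of `K` of norm `δ / 2` is a `δ`-approximation
    subst hy0
    have hnorm : ‖(δ / 2 / ‖u‖) • u‖ = δ / 2 := by
      rw [norm_smul, Real.norm_of_nonneg (by positivity),
        div_mul_cancel₀ _ (norm_ne_zero_iff.mpr hu0)]
    refine ⟨(δ / 2 / ‖u‖) • u, K.smul_mem _ hu, smul_ne_zero (by positivity) hu0, ?_⟩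
    calc ‖v - (δ / 2 / ‖u‖) • u‖ ≤ ‖v‖ + ‖(δ / 2 / ‖u‖) • u‖ := norm_sub_le _ _
      _ ≤ δ := by rw [sub_zero] at hvy; linarith
  · exact ⟨y, hyK, hy0, by linarith⟩

lemma exists_sum_ne_zero_norm_sub_le_of_mem_closedTailSpan {V : Type*} [NormedAddCommGroup V]
    [NormedSpace ℝ V] {e : ℕ → V} (he : ∀ j, e j ≠ 0) {m : ℕ} {v : V}
    (hv : v ∈ closedTailSpan e m) {δ : ℝ} (hδ : 0 < δ) :
    ∃ (A : Finset ℕ) (a : ℕ → ℝ), (∀ i ∈ A, m ≤ i) ∧ ∑ i ∈ A, a i • e i ≠ 0 ∧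
      ‖v - ∑ i ∈ A, a i • e i‖ ≤ δ := by
  obtain ⟨y, hy, hy0, hvy⟩ := exists_ne_zero_norm_sub_le_of_mem_topologicalClosure
    (Submodule.subset_span (Set.mem_image_of_mem e (le_refl m : m ∈ {j | m ≤ j}))) (he m) hv hδ
  obtain ⟨l, hl, rfl⟩ := (Finsupp.mem_span_image_iff_linearCombination ℝ).mp hy
  exact ⟨l.support, l, fun i hi => hl hi, hy0, hvy⟩

lemma exists_seq_successive {ι : Type*} (A : (ι → ℕ) → ι → Finset ℕ)
    (hA : ∀ m k, ∀ i ∈ A m k, m k ≤ i) :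
    ∃ μ : ℕ → ι → ℕ, ∀ n k, ∀ i ∈ A (μ n) k, ∀ i' ∈ A (μ (n + 1)) k, i < i' := by
  let μ : ℕ → ι → ℕ := fun n => Nat.rec 0 (fun _ m k => (A m k).sup id + 1) n
  refine ⟨μ, fun n k i hi i' hi' => ?_⟩
  have hi_le : i ≤ (A (μ n) k).sup id := le_sup (f := id) hi
  have hle_i' : (A (μ n) k).sup id + 1 ≤ i' := hA (μ (n + 1)) k i' hi'
  omega

namespace UniformlyAsymptoticallyCurved

variable {ι : Type*} {X : ι → Type*} [∀ k, NormedAddCommGroup (X k)] [∀ k, NormedSpace ℝ (X k)]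
  {e : ∀ k, ℕ → X k}

lemma eventually_norm_average_le (h : UniformlyAsymptoticallyCurved e) {x : ∀ k, ℕ → X k}
    (hx : ∀ k, IsBlockSequence (e k) (x k)) {C : ℝ} (hC : 0 < C) (hxC : ∀ k j, ‖x k j‖ ≤ C)
    {ε : ℝ} (hε : 0 < ε) :
    ∀ᶠ n : ℕ in atTop, ∀ k, ‖(1 / (n : ℝ)) • ∑ j ∈ range n, x k j‖ ≤ ε := by
  have hx₁ : ∀ k j, ‖C⁻¹ • x k j‖ ≤ 1 := fun k j => by
    rw [norm_smul, Real.norm_of_nonneg (by positivity), inv_mul_le_one₀ hC]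
    exact hxC k j
  have hlim := h (fun k j => C⁻¹ • x k j) (fun k => (hx k).const_smul (inv_ne_zero hC.ne')) hx₁
  filter_upwards [hlim.eventually (gt_mem_nhds (div_pos hε hC))] with n hn k
  have hk : ‖(1 / (n : ℝ)) • ∑ j ∈ range n, C⁻¹ • x k j‖ ≤ ε / C :=
    (le_ciSup ⟨1, Set.forall_mem_range.2 fun k => norm_average_range_le zero_le_one (hx₁ k) n⟩
      k).trans hn.le
  rwa [← smul_sum, smul_comm, norm_smul, Real.norm_of_nonneg (by positivity),
    inv_mul_le_iff₀ hC, mul_div_cancel₀ _ hC.ne'] at hk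

lemma eventually_norm_average_le_of_near_blocks (h : UniformlyAsymptoticallyCurved e)
    {w : ℕ → lp X ∞} (hw : ∀ n, ‖w n‖ ≤ 1) {x : ∀ k, ℕ → X k}
    (hx : ∀ k, IsBlockSequence (e k) (x k)) {δ : ℝ} (hδ : 0 < δ)
    (hwx : ∀ n k, ‖w n k - x k n‖ ≤ δ) :
    ∀ᶠ n : ℕ in atTop, ‖(1 / (n : ℝ)) • ∑ j ∈ range n, w j‖ ≤ 2 * δ := by
  have hxC : ∀ k n, ‖x k n‖ ≤ 1 + δ := fun k n => calc
    ‖x k n‖ ≤ ‖w n k‖ + ‖w n k - x k n‖ := norm_le_norm_add_norm_sub (w n k) (x k n)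
    _ ≤ 1 + δ := add_le_add ((lp.norm_apply_le_norm ENNReal.top_ne_zero _ _).trans (hw n)) (hwx n k)
  filter_upwards [h.eventually_norm_average_le hx (by positivity) hxC hδ] with n hn
  refine lp.norm_le_of_forall_le (by positivity) fun k => ?_
  have hsplit : ((1 / (n : ℝ)) • ∑ j ∈ range n, w j : lp X ∞) k =
      (1 / (n : ℝ)) • ∑ j ∈ range n, x k j + (1 / (n : ℝ)) • ∑ j ∈ range n, (w j k - x k j) := by
    rw [lp.coeFn_smul, lp.coeFn_sum, ← smul_add, ← sum_add_distrib]
    simp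
  rw [hsplit, two_mul]
  exact (norm_add_le _ _).trans (add_le_add (hn k) (norm_average_range_le hδ.le (hwx · k) n))

lemma exists_norm_average_le (h : UniformlyAsymptoticallyCurved e) (he : ∀ k j, e k j ≠ 0)
    {w : (ι → ℕ) → lp X ∞} (hw : ∀ m, ‖w m‖ ≤ 1)
    (hwm : ∀ m k, w m k ∈ closedTailSpan (e k) (m k)) {δ : ℝ} (hδ : 0 < δ) :
    ∃ μ : ℕ → ι → ℕ, ∃ n : ℕ, 1 ≤ n ∧ ‖(1 / (n : ℝ)) • ∑ j ∈ range n, w (μ j)‖ ≤ 2 * δ := by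
  choose A a hAm ha0 haw using fun m k =>
    exists_sum_ne_zero_norm_sub_le_of_mem_closedTailSpan (he k) (hwm m k) hδ
  obtain ⟨μ, hμ⟩ := exists_seq_successive A hAm
  have hblock : ∀ k, IsBlockSequence (e k) fun n => ∑ i ∈ A (μ n) k, a (μ n) k i • e k i :=
    fun k => ⟨fun n => A (μ n) k, fun n => a (μ n) k, fun _ => rfl, fun n => ha0 (μ n) k,
      fun n => hμ n k⟩
  obtain ⟨n, hnorm, hn⟩ := ((h.eventually_norm_average_le_of_near_blocks (fun n => hw (μ n))
    hblock hδ fun n k => haw (μ n) k).and (eventually_ge_atTop 1)).exists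
  exact ⟨μ, n, hn, hnorm⟩

end UniformlyAsymptoticallyCurved

theorem functional_small_on_tails_of_uniformly_asymptotically_curved_general
    (X : ℕ → Type*) [∀ k, NormedAddCommGroup (X k)] [∀ k, NormedSpace ℝ (X k)]
    (e : ∀ k, ℕ → X k) (henorm : ∀ k j, ‖e k j‖ = 1)
    (huac : ∀ x : ∀ k, ℕ → X k, (∀ k, IsBlockSequence (e k) (x k)) →
      (∀ k j, ‖x k j‖ ≤ 1) →
      Filter.Tendsto (fun n : ℕ => ⨆ k : ℕ, ‖(1 / (n : ℝ)) • ∑ j ∈ Finset.range n, x k j‖)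
        Filter.atTop (nhds 0))
    (zstar : lp X ∞ →L[ℝ] ℝ) (η : ℝ) (hη : 0 < η) :
    ∃ m : ℕ → ℕ, ∀ w : lp X ∞, ‖w‖ ≤ 1 →
      (∀ k, (w : ∀ k, X k) k ∈
        (Submodule.span ℝ (e k '' {j | m k ≤ j})).topologicalClosure) →
      |zstar w| ≤ η := by
  by_contra! hcon
  have hsel : ∀ m : ℕ → ℕ, ∃ w : lp X ∞, ‖w‖ ≤ 1 ∧
      (∀ k, w k ∈ closedTailSpan (e k) (m k)) ∧ η < zstar w := fun m => by
    obtain ⟨w, hw1, hwm, hwη⟩ := hcon m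
    rcases lt_abs.mp hwη with h | h
    · exact ⟨w, hw1, hwm, h⟩
    · exact ⟨-w, by rwa [norm_neg], fun k => neg_mem (hwm k), by rwa [map_neg]⟩
  choose w hw1 hwm hwη using hsel
  set δ := η / (2 * (‖zstar‖ + 1))
  obtain ⟨μ, n, hn, hnorm⟩ := UniformlyAsymptoticallyCurved.exists_norm_average_le huac
    (fun k j => norm_ne_zero_iff.mp ((henorm k j).trans_ne one_ne_zero)) hw1 hwm
    (show 0 < δ by positivity)
  have hlower : η < zstar ((1 / (n : ℝ)) • ∑ j ∈ range n, w (μ j)) := by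
    rw [map_smul, map_sum, smul_eq_mul, one_div, lt_inv_mul_iff₀ (by positivity)]
    simpa using sum_lt_sum_of_nonempty (nonempty_range_iff.2 (by omega)) fun j _ => hwη (μ j)
  have hupper : zstar ((1 / (n : ℝ)) • ∑ j ∈ range n, w (μ j)) ≤ ‖zstar‖ * (2 * δ) :=
    (Real.le_norm_self _).trans ((zstar.le_opNorm _).trans (by gcongr))
  have hsmall : ‖zstar‖ * (2 * δ) < η := by
    rw [show ‖zstar‖ * (2 * δ) = ‖zstar‖ / (‖zstar‖ + 1) * η by simp only [δ]; field_simp]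
    exact mul_lt_of_lt_one_left hη ((div_lt_one (by positivity)).2 (lt_add_one _))
  linarith

/-- If the array `(e k j)` of normalized bases of the spaces `X k` is uniformly asymptotically
curved, then for every functional `z*` on `Z = ℓ^∞(X_k)` and every `η > 0` there are tails
`W_k = [e_{(k,j)} : j ≥ m_k]` such that `|z*(w)| ≤ η` for every `w` in the unit ball of `Z`
with `w_k ∈ W_k` for all `k`. -/
theorem functional_small_on_tails_of_uniformly_asymptotically_curved
    (X : ℕ → Type*) [∀ k, NormedAddCommGroup (X k)] [∀ k, NormedSpace ℝ (X k)]
    [∀ k, CompleteSpace (X k)]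
    (e : ∀ k, ℕ → X k) (henorm : ∀ k j, ‖e k j‖ = 1)
    (huac : ∀ x : ∀ k, ℕ → X k, (∀ k, IsBlockSequence (e k) (x k)) →
      (∀ k j, ‖x k j‖ ≤ 1) →
      Filter.Tendsto (fun n : ℕ => ⨆ k : ℕ, ‖(1 / (n : ℝ)) • ∑ j ∈ Finset.range n, x k j‖)
        Filter.atTop (nhds 0))
    (zstar : lp X ∞ →L[ℝ] ℝ) (η : ℝ) (hη : 0 < η) :
    ∃ m : ℕ → ℕ, ∀ w : lp X ∞, ‖w‖ ≤ 1 →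
      (∀ k, (w : ∀ k, X k) k ∈
        (Submodule.span ℝ (e k '' {j | m k ≤ j})).topologicalClosure) →
      |zstar w| ≤ η :=
  functional_small_on_tails_of_uniformly_asymptotically_curved_general X e henorm huac zstar η hη
end

section
/- Let $Z$ be a Banach space equal to an $\ell^\infty$-sum $\ell^\infty(X_k)$, $S: Z \to Z$ a bounded operator, $l \in \mathbb{N}$, $x^* \in X_l^*$, $\rho > 0$, and $\Lambda \subset \mathbb{N}$ infinite. Then there is an infinite subset $\Lambda' \subset \Lambda$ such that $\|x^* \circ P_l \circ S \circ P_{\Lambda'}\| \le \rho/2$, where $P_l$ is the coordinate projection onto $X_l$ and $P_{\Lambda'}$ is the projection onto coordinates in $\Lambda'$. -/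
/-!
Split `Λ` into infinitely many pairwise disjoint infinite pieces `L₀, L₁, …`. If the claim failed,
each `Lⱼ` would carry a unit vector `wⱼ` supported in `Lⱼ` with `x*((S wⱼ)_l) > ρ/2` (after a change
of sign). Disjoint supports make `‖w₀ + ⋯ + w_{n-1}‖ ≤ 1` in the `ℓ^∞`-sum, while the functional
takes a value above `n ρ / 2` on this sum, which exceeds `‖x* ∘ P_l ∘ S‖` for large `n`.
-/

open Function
open scoped ENNReal

theorem Set.Infinite.exists_pairwise_disjoint_infinite_subsets {α : Type*} {Λ : Set α}
    (hΛ : Λ.Infinite) :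
    ∃ L : ℕ → Set α, (∀ j, L j ⊆ Λ) ∧ (∀ j, (L j).Infinite) ∧ Pairwise (Disjoint on L) := by
  set e := hΛ.natEmbedding
  refine ⟨fun j => Set.range fun m => (e (Nat.pair j m) : α), ?_, fun j => ?_, ?_⟩
  · rintro j _ ⟨m, rfl⟩
    exact (e _).2
  · refine Set.infinite_range_of_injective fun m m' h => ?_
    exact (Nat.pair_eq_pair.mp (e.injective (Subtype.coe_injective h))).2
  · intro j j' hjj'
    refine Set.disjoint_left.mpr ?_
    rintro _ ⟨m, rfl⟩ ⟨m', h⟩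
    exact hjj' (Nat.pair_eq_pair.mp (e.injective (Subtype.coe_injective h))).1.symm

namespace lp

variable {α : Type*} {E : α → Type*} [∀ a, NormedAddCommGroup (E a)]

theorem norm_sum_le_of_pairwiseDisjoint {ι : Type*} {s : Finset ι} {A : ι → Set α}
    (hA : (s : Set ι).PairwiseDisjoint A) {w : ι → lp E ∞} {C : ℝ} (hC : 0 ≤ C)
    (hw : ∀ j ∈ s, ‖w j‖ ≤ C) (hsupp : ∀ j ∈ s, ∀ k ∉ A j, w j k = 0) :
    ‖∑ j ∈ s, w j‖ ≤ C := by
  refine lp.norm_le_of_forall_le hC fun k => ?_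
  rw [lp.coeFn_sum, Finset.sum_apply]
  by_cases hk : ∃ j ∈ s, k ∈ A j
  · obtain ⟨j, hj, hkj⟩ := hk
    rw [Finset.sum_eq_single_of_mem j hj fun i hi hij =>
      hsupp i hi k fun hki => Set.disjoint_left.mp (hA hi hj hij) hki hkj]
    exact (lp.norm_apply_le_norm ENNReal.top_ne_zero _ k).trans (hw j hj)
  · push Not at hk
    rw [Finset.sum_eq_zero fun j hj => hsupp j hj k (hk j hj)]
    simpa using hC

variable [∀ a, NormedSpace ℝ (E a)]

theorem exists_supported_lt_of_lt_abs (f : lp E ∞ →L[ℝ] ℝ) {ε : ℝ} {A : Set α}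
    {z : lp E ∞} (hz : ‖z‖ ≤ 1) (hsupp : ∀ k ∉ A, z k = 0) (hfz : ε < |f z|) :
    ∃ w : lp E ∞, ‖w‖ ≤ 1 ∧ (∀ k ∉ A, w k = 0) ∧ ε < f w := by
  rcases lt_abs.mp hfz with h | h
  · exact ⟨z, hz, hsupp, h⟩
  · refine ⟨-z, by rwa [norm_neg], fun k hk => ?_, by rwa [map_neg]⟩
    rw [lp.coeFn_neg, Pi.neg_apply, hsupp k hk, neg_zero]

theorem exists_infinite_subset_abs_le_of_supported (f : lp E ∞ →L[ℝ] ℝ) {ε : ℝ} (hε : 0 < ε)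
    {Λ : Set α} (hΛ : Λ.Infinite) :
    ∃ Λ' ⊆ Λ, Λ'.Infinite ∧ ∀ z : lp E ∞, ‖z‖ ≤ 1 → (∀ k ∉ Λ', z k = 0) → |f z| ≤ ε := by
  by_contra! hbad
  obtain ⟨L, hLΛ, hLinf, hLdisj⟩ := 
    Set.Infinite.exists_pairwise_disjoint_infinite_subsets hΛ
  have hbig (j : ℕ) : ∃ w : lp E ∞, ‖w‖ ≤ 1 ∧ (∀ k ∉ L j, w k = 0) ∧ ε < f w := by
    obtain ⟨z, hz, hsupp, hfz⟩ := hbad (L j) (hLΛ j) (hLinf j)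
    exact exists_supported_lt_of_lt_abs f hz hsupp hfz
  choose w hw hwsupp hfw using hbig
  obtain ⟨n, hn⟩ := exists_nat_gt (‖f‖ / ε)
  have hsum : ‖∑ j ∈ Finset.range n, w j‖ ≤ 1 :=
    norm_sum_le_of_pairwiseDisjoint (hLdisj.set_pairwise _) zero_le_one
      (fun j _ => hw j) fun j _ => hwsupp j
  have hlower : n * ε ≤ f (∑ j ∈ Finset.range n, w j) := by
    rw [map_sum]
    simpa using Finset.card_nsmul_le_sum (Finset.range n) _ ε fun j _ => (hfw j).le
  have hupper : f (∑ j ∈ Finset.range n, w j) ≤ ‖f‖ :=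
    (le_abs_self _).trans ((f.le_opNorm _).trans (mul_le_of_le_one_right (norm_nonneg f) hsum))
  rw [div_lt_iff₀ hε] at hn
  linarith

end lp

theorem exists_infinite_subset_small_coordinate_functional_general
    (X : ℕ → Type*) [∀ k, NormedAddCommGroup (X k)] [∀ k, NormedSpace ℝ (X k)]
    (S : lp X ∞ →L[ℝ] lp X ∞) (l : ℕ) (xstar : X l →L[ℝ] ℝ)
    (ρ : ℝ) (hρ : 0 < ρ) (Λ : Set ℕ) (hΛ : Λ.Infinite) :
    ∃ Λ' : Set ℕ, Λ' ⊆ Λ ∧ Λ'.Infinite ∧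
      ∀ z : lp X ∞, ‖z‖ ≤ 1 → (∀ k ∉ Λ', (z : ∀ k, X k) k = 0) →
        |xstar ((S z : ∀ k, X k) l)| ≤ ρ / 2 :=
  lp.exists_infinite_subset_abs_le_of_supported (xstar ∘L lp.evalCLM ℝ X ∞ l ∘L S)
    (half_pos hρ) hΛ

/-- For a bounded operator `S` on `Z = ℓ^∞(X_k)`, a coordinate `l`, a functional
`x* ∈ X_l*`, `ρ > 0` and an infinite `Λ ⊂ ℕ`, there is an infinite `Λ' ⊂ Λ` such that
`‖x* ∘ P_l ∘ S ∘ P_{Λ'}‖ ≤ ρ/2`, i.e. `|x*((S z)_l)| ≤ ρ/2` for every `z` in the unit ball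
of `Z` supported in `Λ'`. -/
theorem exists_infinite_subset_small_coordinate_functional
    (X : ℕ → Type*) [∀ k, NormedAddCommGroup (X k)] [∀ k, NormedSpace ℝ (X k)]
    [∀ k, CompleteSpace (X k)]
    (S : lp X ∞ →L[ℝ] lp X ∞) (l : ℕ) (xstar : X l →L[ℝ] ℝ)
    (ρ : ℝ) (hρ : 0 < ρ) (Λ : Set ℕ) (hΛ : Λ.Infinite) :
    ∃ Λ' : Set ℕ, Λ' ⊆ Λ ∧ Λ'.Infinite ∧
      ∀ z : lp X ∞, ‖z‖ ≤ 1 → (∀ k ∉ Λ', (z : ∀ k, X k) k = 0) →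
        |xstar ((S z : ∀ k, X k) l)| ≤ ρ / 2 :=
  exists_infinite_subset_small_coordinate_functional_general X S l xstar ρ hρ Λ hΛ
end

section
/- Let $X_k$, $k\in\mathbb{N}$, be Banach spaces each with a normalized Schauder basis $(e_{(k,j)})_j$ of basis constant at most $\lambda$, let $Y = c_0(X_k : k \in \mathbb{N})$, and enumerate the array $(e_{(k,j)})$ into a sequence $(e_n)$ via a bijection $\nu: \mathbb{N}^2 \to \mathbb{N}$ that is increasing in the second coordinate. If $y = \sum_{n=1}^\infty a_n e_n \in Y$ in the sense that the partial sums converge to $y$ in the product topology (coordinatewise in each $X_k$) and $y \in Y$, then the series $\sum_{n=1}^\infty a_n e_n$ converges to $y$ in the norm of $Y$. -/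
open Finset Filter Topology
open scoped ENNReal

/-! Coordinate `k` of the `N`-th partial sum is the partial sum of the basis expansion in `X k`
up to the cut-off `c k N = #{j | ν (k, j) < N}`, which is monotone in `N`. The basis constant
therefore bounds every coordinate of every partial sum by `λ ‖y k‖`, and since `‖y k‖ → 0` the
coordinates with large `k` are uniformly small, while the finitely many others converge. -/

theorem StrictMono.exists_forall_lt_iff {f : ℕ → ℕ} (hf : StrictMono f) (N : ℕ) :
    ∃ m, ∀ j, f j < N ↔ j < m := by
  classical
  have hex : ∃ j, N ≤ f j := ⟨N, hf.le_apply⟩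
  refine ⟨Nat.find hex, fun j => ?_⟩
  simp only [Nat.lt_find_iff, not_le]
  exact ⟨fun hj i hi => (hf.monotone hi).trans_lt hj, fun h => h j le_rfl⟩

theorem monotone_of_forall_lt_iff {f c : ℕ → ℕ} (hc : ∀ N j, f j < N ↔ j < c N) :
    Monotone c := fun _ _ hNN' =>
  le_of_forall_lt fun j hj => (hc _ j).1 (((hc _ j).2 hj).trans_le hNN')

theorem norm_le_mul_norm_of_tendsto {E : Type*} [SeminormedAddCommGroup E] {T : ℕ → E} {x : E}
    {C : ℝ} (hT : ∀ m n, m ≤ n → ‖T m‖ ≤ C * ‖T n‖) (hx : Tendsto T atTop (𝓝 x)) (m : ℕ) :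
    ‖T m‖ ≤ C * ‖x‖ :=
  ge_of_tendsto (hx.norm.const_mul C) (eventually_atTop.2 ⟨m, hT m⟩)

theorem lp.tendsto_of_tendsto_apply_of_norm_sub_le {α ι : Type*} {X : ι → Type*}
    [∀ i, NormedAddCommGroup (X i)] {l : Filter α} {F : α → lp X ∞} {y : lp X ∞} {g : ι → ℝ}
    (hF : ∀ i, Tendsto (fun a => (F a : ∀ i, X i) i) l (𝓝 (y i)))
    (hg : Tendsto g cofinite (𝓝 0)) (hFg : ∀ a i, ‖(F a : ∀ i, X i) i - y i‖ ≤ g i) :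
    Tendsto F l (𝓝 y) := by
  refine Metric.tendsto_nhds.2 fun ε hε => ?_
  have hε2 := half_pos hε
  have hfin : {i | ε / 2 ≤ g i}.Finite := by
    simpa only [not_lt] using eventually_cofinite.1 (hg.eventually (gt_mem_nhds hε2))
  have hnear : ∀ᶠ a in l, ∀ i ∈ {i | ε / 2 ≤ g i}, dist ((F a : ∀ i, X i) i) (y i) < ε / 2 :=
    (eventually_all_finite hfin).2 fun i _ => Metric.tendsto_nhds.1 (hF i) _ hε2
  filter_upwards [hnear] with a ha
  rw [dist_eq_norm]
  refine (lp.norm_le_of_forall_le hε2.le fun i => ?_).trans_lt (half_lt_self hε)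
  rw [lp.coeFn_sub, Pi.sub_apply]
  by_cases hi : ε / 2 ≤ g i
  · rw [← dist_eq_norm]
    exact (ha i hi).le
  · exact (hFg a i).trans (not_le.1 hi).le

theorem lp.sum_smul_single_symm_apply {ι κ β : Type*} [DecidableEq ι] [DecidableEq β]
    {X : ι → Type*} [∀ k, NormedAddCommGroup (X k)] [∀ k, NormedSpace ℝ (X k)]
    (e : ∀ k, κ → X k) (ν : ι × κ ≃ β) (a : β → ℝ) (s : Finset β) (k : ι) :
    ((∑ n ∈ s, a n • lp.single ∞ (ν.symm n).1 (e _ (ν.symm n).2) : lp X ∞) : ∀ k, X k) k =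
      ∑ j ∈ s.preimage (fun j => ν (k, j)) (ν.injective.comp (Prod.mk_right_injective k)).injOn,
        a (ν (k, j)) • e k j := by
  have hzero : ∀ n ∈ s, n ∉ Set.range (fun j => ν (k, j)) →
      ((a n • lp.single ∞ (ν.symm n).1 (e _ (ν.symm n).2) : lp X ∞) : ∀ k, X k) k = 0 := by
    intro n _ hn
    have hk : k ≠ (ν.symm n).1 := fun hk =>
      hn ⟨(ν.symm n).2, by rw [hk]; exact ν.apply_symm_apply n⟩
    rw [lp.coeFn_smul, Pi.smul_apply, lp.single_apply_ne ∞ _ _ hk, smul_zero]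
  rw [lp.coeFn_sum, Finset.sum_apply, ← sum_preimage (fun j => ν (k, j)) s
    (ν.injective.comp (Prod.mk_right_injective k)).injOn _ hzero]
  refine sum_congr rfl fun j _ => ?_
  rw [lp.coeFn_smul, Pi.smul_apply, ν.symm_apply_apply, lp.single_apply_self]

theorem coordinatewise_convergence_to_c0_implies_norm_convergence_general
    (X : ℕ → Type*) [∀ k, NormedAddCommGroup (X k)] [∀ k, NormedSpace ℝ (X k)]
    (lam : ℝ)
    (e : ∀ k, ℕ → X k)
    (hbasisconst : ∀ k (a : ℕ → ℝ) (m n : ℕ), m ≤ n →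
      ‖∑ j ∈ Finset.range m, a j • e k j‖ ≤ lam * ‖∑ j ∈ Finset.range n, a j • e k j‖)
    (ν : ℕ × ℕ ≃ ℕ) (hν : ∀ k i j, ν (k, i) < ν (k, j) ↔ i < j)
    (E : ℕ → lp X ∞)
    (hE : ∀ n : ℕ, E n = lp.single ∞ (ν.symm n).1 (e (ν.symm n).1 (ν.symm n).2))
    (a : ℕ → ℝ) (y : lp X ∞)
    (hy : Filter.Tendsto (fun k => ‖(y : ∀ k, X k) k‖) Filter.atTop (nhds 0))
    (hcoord : ∀ k : ℕ, Filter.Tendsto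
      (fun N => ((∑ n ∈ Finset.range N, a n • E n : lp X ∞) : ∀ k, X k) k)
      Filter.atTop (nhds ((y : ∀ k, X k) k))) :
    Filter.Tendsto (fun N => ∑ n ∈ Finset.range N, a n • E n) Filter.atTop (nhds y) := by
  classical
  set S : ℕ → lp X ∞ := fun N => ∑ n ∈ range N, a n • E n
  choose c hc using fun k N => StrictMono.exists_forall_lt_iff (fun i j => (hν k i j).2) N
  have hS : ∀ N k, (S N : ∀ k, X k) k = ∑ j ∈ range (c k N), a (ν (k, j)) • e k j := by
    intro N k
    simp only [S, hE]
    rw [lp.sum_smul_single_symm_apply]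
    congr 1
    ext j
    rw [mem_preimage, mem_range, mem_range, hc]
  have hbound : ∀ N k, ‖(S N : ∀ k, X k) k‖ ≤ lam * ‖y k‖ := fun N k =>
    norm_le_mul_norm_of_tendsto (T := fun N => (S N : ∀ k, X k) k) (fun N N' hNN' => by
      simpa only [hS] using hbasisconst k (fun j => a (ν (k, j))) _ _
        (monotone_of_forall_lt_iff (hc k) hNN')) (hcoord k) N
  refine lp.tendsto_of_tendsto_apply_of_norm_sub_le hcoord (g := fun k => (lam + 1) * ‖y k‖)
    (by simpa [Nat.cofinite_eq_atTop] using hy.const_mul (lam + 1)) fun N k => ?_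
  calc ‖(S N : ∀ k, X k) k - y k‖ ≤ ‖(S N : ∀ k, X k) k‖ + ‖y k‖ := norm_sub_le _ _
    _ ≤ (lam + 1) * ‖y k‖ := by linarith [hbound N k]

/-- If the array `(e_{(k,j)})` of normalized Schauder bases (basis constant at most `λ`) is
enumerated into `(e_n)` via a bijection `ν` increasing in the second coordinate, and the
partial sums of `∑ a_n e_n` converge coordinatewise to an element `y` of the `c₀`-sum
`Y = c₀(X_k)`, then the series converges to `y` in norm. -/
theorem coordinatewise_convergence_to_c0_implies_norm_convergence
    (X : ℕ → Type*) [∀ k, NormedAddCommGroup (X k)] [∀ k, NormedSpace ℝ (X k)]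
    [∀ k, CompleteSpace (X k)]
    (lam : ℝ) (hlam : 1 ≤ lam)
    (e : ∀ k, ℕ → X k) (henorm : ∀ k j, ‖e k j‖ = 1)
    (hbasisconst : ∀ k (a : ℕ → ℝ) (m n : ℕ), m ≤ n →
      ‖∑ j ∈ Finset.range m, a j • e k j‖ ≤ lam * ‖∑ j ∈ Finset.range n, a j • e k j‖)
    (ν : ℕ × ℕ ≃ ℕ) (hν : ∀ k i j, ν (k, i) < ν (k, j) ↔ i < j)
    (E : ℕ → lp X ∞)
    (hE : ∀ n : ℕ, E n = lp.single ∞ (ν.symm n).1 (e (ν.symm n).1 (ν.symm n).2))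
    (a : ℕ → ℝ) (y : lp X ∞)
    (hy : Filter.Tendsto (fun k => ‖(y : ∀ k, X k) k‖) Filter.atTop (nhds 0))
    (hcoord : ∀ k : ℕ, Filter.Tendsto
      (fun N => ((∑ n ∈ Finset.range N, a n • E n : lp X ∞) : ∀ k, X k) k)
      Filter.atTop (nhds ((y : ∀ k, X k) k))) :
    Filter.Tendsto (fun N => ∑ n ∈ Finset.range N, a n • E n) Filter.atTop (nhds y) :=
  coordinatewise_convergence_to_c0_implies_norm_convergence_general X lam e hbasisconst ν hν E hE a
    y hy hcoord
end
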